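/- arXiv:1101.5220 — 5 statements merged into one kernel-verified Lean document; each statement's English description precedes it below -/
import Mathlib

section
/- For every nonnegative integer k, (2k)! · Σ_{i=0}^{2k} (-1)^i / (2^{2k-i} · (2k-i)! · (i+1)!) = 1 / ((2k+1) · 2^{2k}). -/
/-!
Multiplying the sum by `(2k + 1) 2^{2k}` turns its `i`-th term into `(-2)^i C(2k+1, i+1)`, and
these add up to `((-2 + 1)^{2k+1} - 1) / (-2) = 1` by the binomial theorem.
-/

open Finset

theorem mul_sum_pow_mul_choose_succ {R : Type*} [CommRing R] (x : R) (n : ℕ) :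
    x * ∑ i ∈ range n, x ^ i * n.choose (i + 1) = (x + 1) ^ n - 1 := by
  rw [add_pow, sum_range_succ', mul_sum]
  simp only [one_pow, mul_one, pow_zero, Nat.choose_zero_right, Nat.cast_one, pow_succ']
  simp only [mul_assoc, add_sub_cancel_right]

theorem sum_neg_two_pow_mul_choose_succ {R : Type*} [CommRing R] [IsDomain R] [CharZero R]
    {n : ℕ} (hn : Odd n) : ∑ i ∈ range n, (-2 : R) ^ i * n.choose (i + 1) = 1 := by
  refine mul_left_cancel₀ (by norm_num : (-2 : R) ≠ 0) ?_
  rw [mul_sum_pow_mul_choose_succ, show (-2 : R) + 1 = -1 by norm_num, hn.neg_one_pow]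
  ring

theorem factorial_mul_term_eq {n i : ℕ} (hi : i < n + 1) :
    (n.factorial : ℚ) * ((-1) ^ i / (2 ^ (n - i) * ((n - i).factorial : ℚ) * (i + 1).factorial))
      = (-2) ^ i * (n + 1).choose (i + 1) / ((n + 1) * 2 ^ n) := by
  obtain ⟨m, rfl⟩ := Nat.exists_eq_add_of_le' (Nat.le_of_lt_succ hi)
  rw [Nat.cast_choose ℚ hi, Nat.add_sub_cancel, Nat.succ_sub_succ, Nat.add_sub_cancel,
    Nat.factorial_succ (m + i), pow_add, neg_pow (2 : ℚ)]
  push_cast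
  field_simp

theorem leading_coefficient_identity (k : ℕ) :
    ((2 * k).factorial : ℚ) *
        ∑ i ∈ Finset.range (2 * k + 1),
          (-1 : ℚ) ^ i / (2 ^ (2 * k - i) * ((2 * k - i).factorial : ℚ) * ((i + 1).factorial : ℚ)) =
      1 / ((2 * k + 1) * 2 ^ (2 * k)) := by
  rw [mul_sum, sum_congr rfl fun i hi => factorial_mul_term_eq (mem_range.mp hi),
    ← sum_div, sum_neg_two_pow_mul_choose_succ (odd_two_mul_add_one k)]
  push_cast
  rfl
end

section
/- Define m_k = (e^{k/2}/k) · Σ_{m=0}^{k-1} (k^m/m!) · C(k, m+1) for positive integers k and set c_0 = √5/2 + 2·log((1+√5)/2). Then limsup_{k→∞} (m_k)^{1/k} ≤ e^{c_0}. In particular, any random variable whose k-th moments are m_k is almost surely bounded by e^{c_0}. -/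
/-!
Comparing `k^m / m!` with one term of the series of `exp (k t)` gives
`k^m / m! ≤ exp (k t) t^{-m}` for every `t > 0`, and the binomial theorem then sums the
remaining factor: `m_k ≤ (t / k) (exp (1/2 + t) (1 + t⁻¹))^k`. The choice `t = φ⁻¹` minimises
`t + log (1 + t⁻¹)` and turns the base into `e^{c₀}`. Markov's inequality for the `k`-th
moments then gives `P(Y ≥ a) ≤ (e^{c₀} / a)^k → 0` for every `a > e^{c₀}`.
-/

open MeasureTheory Filter Finset

/-- The `k`-th moment `m_k = (e^{k/2}/k) Σ_{m<k} (k^m/m!) C(k,m+1)` of the central limit of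
products of free random variables with unit log-variance. -/
noncomputable def momentY (k : ℕ) : ℝ :=
  (Real.exp (k / 2) / k) * ∑ m ∈ Finset.range k, (k : ℝ) ^ m / m.factorial * (Nat.choose k (m + 1))

open Real goldenRatio

theorem sum_pow_div_factorial_mul_choose_le (k : ℕ) {t : ℝ} (ht : 0 < t) :
    ∑ m ∈ range k, (k : ℝ) ^ m / m.factorial * k.choose (m + 1) ≤
      t * exp (k * t) * (1 + t⁻¹) ^ k := by
  have hterm (m : ℕ) : (k : ℝ) ^ m / m.factorial ≤ exp (k * t) * t⁻¹ ^ m := by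
    calc (k : ℝ) ^ m / m.factorial = (k * t) ^ m / m.factorial * t⁻¹ ^ m := by
          rw [mul_pow, mul_div_right_comm, mul_assoc, ← mul_pow, mul_inv_cancel₀ ht.ne', one_pow,
            mul_one]
      _ ≤ exp (k * t) * t⁻¹ ^ m := by gcongr; exact pow_div_factorial_le_exp _ (by positivity) m
  have hbinom : ∑ m ∈ range k, t⁻¹ ^ (m + 1) * k.choose (m + 1) ≤ (1 + t⁻¹) ^ k := by
    rw [add_comm, add_pow, sum_range_succ']
    simp only [one_pow, mul_one, pow_zero, Nat.choose_zero_right, Nat.cast_one]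
    linarith
  calc ∑ m ∈ range k, (k : ℝ) ^ m / m.factorial * k.choose (m + 1)
      ≤ ∑ m ∈ range k, exp (k * t) * t⁻¹ ^ m * k.choose (m + 1) := by
        gcongr with m
        exact hterm m
    _ = t * exp (k * t) * ∑ m ∈ range k, t⁻¹ ^ (m + 1) * k.choose (m + 1) := by
        rw [mul_sum]
        refine sum_congr rfl fun m _ => ?_
        rw [pow_succ]
        field_simp
    _ ≤ t * exp (k * t) * (1 + t⁻¹) ^ k := mul_le_mul_of_nonneg_left hbinom (by positivity)

theorem momentY_le_pow {t : ℝ} (ht : 0 < t) {k : ℕ} (htk : t ≤ k) :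
    momentY k ≤ (exp (1 / 2 + t) * (1 + t⁻¹)) ^ k := by
  have hk : (0 : ℝ) < k := ht.trans_le htk
  calc momentY k ≤ exp (k / 2) / k * (t * exp (k * t) * (1 + t⁻¹) ^ k) := by
        unfold momentY
        gcongr
        exact sum_pow_div_factorial_mul_choose_le k ht
    _ = t / k * (exp (1 / 2 + t) * (1 + t⁻¹)) ^ k := by
        rw [mul_pow, ← exp_nat_mul]
        field_simp
        rw [← exp_add]
        ring_nf
    _ ≤ (exp (1 / 2 + t) * (1 + t⁻¹)) ^ k := by
        apply mul_le_of_le_one_left (by positivity)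
        rwa [div_le_one hk]

theorem momentY_nonneg (k : ℕ) : 0 ≤ momentY k := by
  unfold momentY
  positivity

theorem momentY_pos {k : ℕ} (hk : 0 < k) : 0 < momentY k := by
  unfold momentY
  refine mul_pos (by positivity) (sum_pos' (fun m _ => by positivity) ⟨0, mem_range.2 hk, ?_⟩)
  simpa using hk

theorem exp_sqrt5_div_two_add_two_mul_log_goldenRatio :
    exp (√5 / 2 + 2 * log φ) = exp (1 / 2 + φ⁻¹) * (1 + φ⁻¹⁻¹) := by
  have h5 : √5 / 2 = 1 / 2 + φ⁻¹ := by rw [inv_goldenRatio]; ring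
  rw [h5, exp_add, inv_inv, add_comm 1 φ, ← goldenRatio_sq, ← log_rpow goldenRatio_pos,
    exp_log (by positivity), rpow_two]

theorem limsup_rpow_one_div_le_of_le_pow {a : ℕ → ℝ} {B : ℝ} (ha : ∀ k, 0 ≤ a k) (hB : 0 ≤ B)
    (h : ∀ᶠ k in atTop, a k ≤ B ^ k) :
    limsup (fun k : ℕ => a k ^ ((1 : ℝ) / k)) atTop ≤ B := by
  refine limsup_le_of_le (isCoboundedUnder_le_of_le atTop fun k => rpow_nonneg (ha k) _) ?_
  filter_upwards [h, eventually_ne_atTop 0] with k hk hk0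
  calc a k ^ ((1 : ℝ) / k) ≤ (B ^ k) ^ ((1 : ℝ) / k) := by gcongr; exact ha k
    _ = B := by rw [one_div, pow_rpow_inv_natCast hB hk0]

section Moments

variable {Ω : Type*} [MeasurableSpace Ω] {μ : Measure Ω} [IsFiniteMeasure μ] {Y : Ω → ℝ} {C : ℝ}

theorem measure_le_eq_zero_of_integral_pow_le (hY : 0 ≤ᵐ[μ] Y) (hC : 0 ≤ C) {a : ℝ} (hCa : C < a)
    (hint : ∀ᶠ k in atTop, Integrable (fun ω => Y ω ^ k) μ)
    (hmom : ∀ᶠ k in atTop, ∫ ω, Y ω ^ k ∂μ ≤ C ^ k) :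
    μ {ω | a ≤ Y ω} = 0 := by
  have ha : 0 < a := hC.trans_lt hCa
  have hmarkov : ∀ᶠ k in atTop, μ.real {ω | a ≤ Y ω} ≤ (C / a) ^ k := by
    filter_upwards [hint, hmom] with k hk hmk
    have hsub : {ω | a ≤ Y ω} ⊆ {ω | a ^ k ≤ Y ω ^ k} := fun ω hω =>
      pow_le_pow_left₀ ha.le hω k
    rw [div_pow, le_div_iff₀' (by positivity)]
    calc a ^ k * μ.real {ω | a ≤ Y ω} ≤ a ^ k * μ.real {ω | a ^ k ≤ Y ω ^ k} :=
          mul_le_mul_of_nonneg_left (measureReal_mono hsub (measure_ne_top μ _)) (by positivity)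
      _ ≤ ∫ ω, Y ω ^ k ∂μ :=
          mul_meas_ge_le_integral_of_nonneg (hY.mono fun ω hω => pow_nonneg hω k) hk _
      _ ≤ C ^ k := hmk
  have hlim : Tendsto (fun k : ℕ => (C / a) ^ k) atTop (nhds 0) :=
    tendsto_pow_atTop_nhds_zero_of_lt_one (by positivity) ((div_lt_one ha).2 hCa)
  exact (measureReal_eq_zero_iff).1
    (le_antisymm (ge_of_tendsto hlim hmarkov) measureReal_nonneg)

theorem ae_le_of_integral_pow_le (hY : 0 ≤ᵐ[μ] Y) (hC : 0 ≤ C)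
    (hint : ∀ᶠ k in atTop, Integrable (fun ω => Y ω ^ k) μ)
    (hmom : ∀ᶠ k in atTop, ∫ ω, Y ω ^ k ∂μ ≤ C ^ k) :
    ∀ᵐ ω ∂μ, Y ω ≤ C :=
  (ae_le_const_iff_forall_gt_measure_zero Y C).2 fun _ hCa =>
    measure_le_eq_zero_of_integral_pow_le hY hC hCa hint hmom

end Moments

theorem momentY_growth_and_bound :
    limsup (fun k : ℕ => momentY k ^ ((1 : ℝ) / k)) atTop ≤
        Real.exp (Real.sqrt 5 / 2 + 2 * Real.log ((1 + Real.sqrt 5) / 2)) ∧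
      ∀ {Ω : Type} [MeasurableSpace Ω] (μ : Measure Ω) [IsProbabilityMeasure μ] (Y : Ω → ℝ),
        Measurable Y → (∀ ω, 0 < Y ω) →
        (∀ k : ℕ, 0 < k → ∫ ω, Y ω ^ k ∂μ = momentY k) →
        μ {ω | Real.exp (Real.sqrt 5 / 2 + 2 * Real.log ((1 + Real.sqrt 5) / 2)) < Y ω} = 0 := by
  have hbound : ∀ᶠ k : ℕ in atTop, momentY k ≤ exp (√5 / 2 + 2 * log φ) ^ k := by
    filter_upwards [eventually_ge_atTop 1] with k hk
    rw [exp_sqrt5_div_two_add_two_mul_log_goldenRatio]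
    exact momentY_le_pow (inv_pos.2 goldenRatio_pos)
      ((inv_le_one_of_one_le₀ one_lt_goldenRatio.le).trans (by exact_mod_cast hk))
  refine ⟨limsup_rpow_one_div_le_of_le_pow momentY_nonneg (exp_pos _).le hbound, ?_⟩
  intro Ω _ μ _ Y _ hY hmom
  have hmom' : ∀ᶠ k in atTop, ∫ ω, Y ω ^ k ∂μ = momentY k :=
    eventually_gt_atTop 0 |>.mono hmom
  have hint : ∀ᶠ k in atTop, Integrable (fun ω => Y ω ^ k) μ := by
    filter_upwards [hmom', eventually_gt_atTop 0] with k hk hk0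
    exact Integrable.of_integral_ne_zero (hk ▸ (momentY_pos hk0).ne')
  have hle := ae_le_of_integral_pow_le (ae_of_all μ fun ω => (hY ω).le) (exp_pos _).le hint
    (hmom'.and hbound |>.mono fun k hk => hk.1.trans_le hk.2)
  simpa only [not_le] using ae_iff.1 hle
end

section
/- Let σ > 0 and define g(s) = e^{σ²s/2} · ₁F₁(1-s; 2; -σ²s) as an entire function of s. Then the fourth derivative satisfies g''''(0) = 2σ⁴ + σ⁶/3 + σ⁸/80. -/
open Finset

/-- Confluent hypergeometric function `₁F₁(a; 2; z)` (second parameter fixed to `2`). -/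
noncomputable def oneF1two (a z : ℝ) : ℝ :=
  ∑' n : ℕ, (∏ j ∈ Finset.range n, (a + j)) * z ^ n / ((n + 1).factorial * n.factorial)

/-!
Expanding both factors, `exp (A s) · ₁F₁(1 - s; 2; -T s)` is a double series over `(m, n)` of
finite sums of monomials: the `n`-th hypergeometric term is a polynomial of degree `2n` divisible
by `sⁿ`.  On `|s| < 1` the `k`-th derivative of the `(m, n)` term is bounded by
`(2ᵏ|A|)ᵐ/m! · (4ᵏ|T|)ⁿ/n!`, so the series may be differentiated term by term.  At `s = 0` only
monomials of degree `4` survive, and they occur only for `m, n ≤ 4`; with `A = σ²/2`, `T = σ²`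
the resulting finite sum is `2σ⁴ + σ⁶/3 + σ⁸/80`.
-/

open Real

section TermwiseDeriv

variable {α 𝕜 F : Type*} [NontriviallyNormedField 𝕜] [IsRCLikeNormedField 𝕜]
  [NormedAddCommGroup F] [NormedSpace 𝕜 F] [CompleteSpace F]

theorem iteratedDeriv_tsum_of_isPreconnected {f : α → 𝕜 → F} {v : ℕ → α → ℝ} {t : Set 𝕜}
    {N : ℕ} (hf : ∀ i, ContDiff 𝕜 N (f i)) (hv : ∀ k ≤ N, Summable (v k))
    (ht : IsOpen t) (h't : IsPreconnected t)
    (hfv : ∀ k ≤ N, ∀ i, ∀ y ∈ t, ‖iteratedDeriv k (f i) y‖ ≤ v k i) {y : 𝕜} (hy : y ∈ t) :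
    iteratedDeriv N (fun z => ∑' i, f i z) y = ∑' i, iteratedDeriv N (f i) y := by
  suffices ∀ k ≤ N, Set.EqOn (iteratedDeriv k fun z => ∑' i, f i z)
      (fun z => ∑' i, iteratedDeriv k (f i) z) t from this N le_rfl hy
  intro k hk
  induction k with
  | zero => intro z _; simp
  | succ k ih =>
    intro z hz
    have hderiv : ∀ i, ∀ x ∈ t,
        HasDerivAt (iteratedDeriv k (f i)) (iteratedDeriv (k + 1) (f i) x) x := by
      intro i x _
      rw [iteratedDeriv_succ]
      exact ((hf i).differentiable_iteratedDeriv k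
        (by exact_mod_cast hk)).differentiableAt.hasDerivAt
    rw [iteratedDeriv_succ, ((ih (by omega)).eventuallyEq_of_mem (ht.mem_nhds hz)).deriv_eq]
    exact (hasDerivAt_tsum_of_isPreconnected (hv (k + 1) hk) ht h't hderiv
      (hfv (k + 1) hk) hz
      ((hv k (by omega)).of_norm_bounded fun i => hfv k (by omega) i z hz) hz).deriv

end TermwiseDeriv

section Monomials

variable {𝕜 κ : Type*} [NontriviallyNormedField 𝕜]

theorem iteratedDeriv_sum_mul_pow (J : Finset κ) (a : κ → 𝕜) (d : κ → ℕ) (k : ℕ) (x : 𝕜) :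
    iteratedDeriv k (fun x => ∑ j ∈ J, a j * x ^ d j) x =
      ∑ j ∈ J, a j * (d j).descFactorial k * x ^ (d j - k) := by
  rw [iteratedDeriv_fun_sum fun j _ => by fun_prop]
  refine sum_congr rfl fun j _ => ?_
  rw [iteratedDeriv_const_mul_field, iteratedDeriv_pow, mul_assoc]

theorem norm_iteratedDeriv_sum_mul_pow_le (J : Finset κ) (a : κ → 𝕜) (d : κ → ℕ) (k : ℕ)
    {x : 𝕜} (hx : ‖x‖ ≤ 1) :
    ‖iteratedDeriv k (fun x => ∑ j ∈ J, a j * x ^ d j) x‖ ≤ ∑ j ∈ J, ‖a j‖ * d j ^ k := by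
  rw [iteratedDeriv_sum_mul_pow]
  refine (norm_sum_le _ _).trans (sum_le_sum fun j _ => ?_)
  have hfac : ‖((d j).descFactorial k : 𝕜)‖ ≤ (d j : ℝ) ^ k := by
    refine (Nat.norm_cast_le _).trans ?_
    rw [norm_one, mul_one]
    exact_mod_cast Nat.descFactorial_le_pow _ _
  rw [norm_mul, norm_mul, norm_pow]
  calc ‖a j‖ * ‖((d j).descFactorial k : 𝕜)‖ * ‖x‖ ^ (d j - k)
      ≤ ‖a j‖ * (d j : ℝ) ^ k * 1 := by gcongr; exact pow_le_one₀ (norm_nonneg x) hx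
    _ = ‖a j‖ * d j ^ k := mul_one _

end Monomials

theorem sum_powerset_range_succ {β : Type*} [AddCommMonoid β] (n : ℕ) (f : Finset ℕ → β) :
    ∑ S ∈ (range (n + 1)).powerset, f S =
      ∑ S ∈ (range n).powerset, f S + ∑ S ∈ (range n).powerset, f (insert n S) := by
  rw [range_add_one, sum_powerset_insert notMem_range_self]

theorem sum_powerset_range_prod_one_add (n : ℕ) :
    ∑ S ∈ (range n).powerset, ∏ j ∈ S, ((1 : ℝ) + j) = (n + 1).factorial := by
  have h := prod_add (fun j : ℕ => (1 : ℝ) + j) (fun _ => 1) (range n)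
  simp only [prod_const_one, mul_one] at h
  rw [← h, ← prod_range_add_one_eq_factorial, prod_range_succ']
  push_cast
  rw [mul_one]
  exact prod_congr rfl fun j _ => by ring

noncomputable def oneF1twoTerm (T : ℝ) (n : ℕ) (s : ℝ) : ℝ :=
  (∏ j ∈ range n, (1 - s + j)) * (-(T * s)) ^ n / ((n + 1).factorial * n.factorial)

/-- Coefficient of `s ^ (2n - #S)` in `oneF1twoTerm T n s`, from choosing `1 + j` in the factors
`j ∈ S` of `∏ j < n, (1 + j - s)` and `-s` in the others. -/
noncomputable def oneF1twoCoeff (T : ℝ) (n : ℕ) (S : Finset ℕ) : ℝ :=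
  (-T) ^ n / ((n + 1).factorial * n.factorial) * ((-1) ^ (n - #S) * ∏ j ∈ S, ((1 : ℝ) + j))

theorem oneF1twoTerm_eq_sum (T : ℝ) (n : ℕ) (s : ℝ) :
    oneF1twoTerm T n s =
      ∑ S ∈ (range n).powerset, oneF1twoCoeff T n S * s ^ (2 * n - #S) := by
  have hprod : ∏ j ∈ range n, (1 - s + j) = ∏ j ∈ range n, (((1 : ℝ) + j) + -s) :=
    prod_congr rfl fun j _ => by ring
  rw [oneF1twoTerm, hprod, prod_add, sum_mul, sum_div]
  refine sum_congr rfl fun S hS => ?_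
  have hcard : #(range n \ S) = n - #S := by
    rw [card_sdiff_of_subset (mem_powerset.1 hS), card_range]
  have hdeg : 2 * n - #S = n + (n - #S) := by
    have := card_le_card (mem_powerset.1 hS); rw [card_range] at this; omega
  rw [prod_const, hcard, oneF1twoCoeff, hdeg, pow_add, neg_pow s, neg_mul_eq_neg_mul, mul_pow]
  ring

theorem sum_abs_oneF1twoCoeff (T : ℝ) (n : ℕ) :
    ∑ S ∈ (range n).powerset, |oneF1twoCoeff T n S| = |T| ^ n / n.factorial := by
  have hprod (S : Finset ℕ) : 0 ≤ ∏ j ∈ S, ((1 : ℝ) + j) := prod_nonneg fun j _ => by positivity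
  simp only [oneF1twoCoeff, abs_mul, abs_div, abs_pow, abs_neg, abs_one, one_pow, one_mul,
    abs_of_nonneg (hprod _), Nat.abs_cast]
  rw [← mul_sum, sum_powerset_range_prod_one_add]
  field_simp

theorem abs_oneF1twoTerm_le (T : ℝ) (n : ℕ) {s : ℝ} (hs : |s| ≤ 1) :
    |oneF1twoTerm T n s| ≤ |T| ^ n / n.factorial := by
  simpa [oneF1twoTerm_eq_sum, sum_abs_oneF1twoCoeff] using
    norm_iteratedDeriv_sum_mul_pow_le (range n).powerset (oneF1twoCoeff T n) (2 * n - #·) 0 hs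

noncomputable def expMulTerm (A T : ℝ) (p : ℕ × ℕ) (s : ℝ) : ℝ :=
  (A * s) ^ p.1 / p.1.factorial * oneF1twoTerm T p.2 s

theorem exp_mul_oneF1two_eq_tsum (A T : ℝ) {s : ℝ} (hs : |s| ≤ 1) :
    exp (A * s) * oneF1two (1 - s) (-(T * s)) = ∑' p, expMulTerm A T p s := by
  have hexp : exp (A * s) = ∑' m : ℕ, (A * s) ^ m / m.factorial := by
    rw [exp_eq_exp_ℝ, NormedSpace.exp_eq_tsum_div]
  have hA : Summable fun m : ℕ => ‖(A * s) ^ m / m.factorial‖ := by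
    simpa [abs_div, abs_pow] using Real.summable_pow_div_factorial |A * s|
  have hT : Summable fun n => ‖oneF1twoTerm T n s‖ :=
    (Real.summable_pow_div_factorial |T|).of_nonneg_of_le (fun _ => norm_nonneg _)
      fun n => abs_oneF1twoTerm_le T n hs
  rw [hexp, show oneF1two (1 - s) (-(T * s)) = ∑' n, oneF1twoTerm T n s from rfl,
    tsum_mul_tsum_of_summable_norm hA hT]
  rfl

theorem expMulTerm_eq_sum (A T : ℝ) (p : ℕ × ℕ) :
    expMulTerm A T p = fun s => ∑ S ∈ (range p.2).powerset,
      A ^ p.1 / p.1.factorial * oneF1twoCoeff T p.2 S * s ^ (p.1 + (2 * p.2 - #S)) := by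
  ext s
  rw [expMulTerm, oneF1twoTerm_eq_sum, mul_sum]
  refine sum_congr rfl fun S _ => ?_
  rw [mul_pow, pow_add]
  ring

theorem abs_iteratedDeriv_expMulTerm_le (A T : ℝ) (k : ℕ) (p : ℕ × ℕ) {s : ℝ} (hs : |s| ≤ 1) :
    |iteratedDeriv k (expMulTerm A T p) s| ≤
      (2 ^ k * |A|) ^ p.1 / p.1.factorial * ((4 ^ k * |T|) ^ p.2 / p.2.factorial) := by
  obtain ⟨m, n⟩ := p
  have hdeg (S : Finset ℕ) : ((m + (2 * n - #S) : ℕ) : ℝ) ^ k ≤ (2 ^ k) ^ m * (4 ^ k) ^ n := by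
    have h : m + (2 * n - #S) ≤ 2 ^ (m + 2 * n) :=
      (show m + (2 * n - #S) ≤ m + 2 * n by omega).trans Nat.lt_two_pow_self.le
    calc ((m + (2 * n - #S) : ℕ) : ℝ) ^ k ≤ ((2 ^ (m + 2 * n) : ℕ) : ℝ) ^ k := by gcongr
      _ = (2 ^ k) ^ m * (4 ^ k) ^ n := by push_cast; rw [pow_add, pow_mul]; ring
  rw [expMulTerm_eq_sum]
  refine (norm_iteratedDeriv_sum_mul_pow_le _ _ _ k (by rwa [Real.norm_eq_abs])).trans ?_
  calc ∑ S ∈ (range n).powerset, ‖A ^ m / m.factorial * oneF1twoCoeff T n S‖ *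
        ((m + (2 * n - #S) : ℕ) : ℝ) ^ k
      ≤ ∑ S ∈ (range n).powerset, |A| ^ m / m.factorial * |oneF1twoCoeff T n S| *
          ((2 ^ k) ^ m * (4 ^ k) ^ n) := by
        refine sum_le_sum fun S _ => ?_
        rw [Real.norm_eq_abs, abs_mul, abs_div, abs_pow, Nat.abs_cast]
        gcongr
        exact hdeg S
    _ = (2 ^ k * |A|) ^ m / m.factorial * ((4 ^ k * |T|) ^ n / n.factorial) := by
        rw [← sum_mul, ← mul_sum, sum_abs_oneF1twoCoeff]
        ring

theorem summable_pow_div_factorial_mul (a b : ℝ) :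
    Summable fun p : ℕ × ℕ => a ^ p.1 / p.1.factorial * (b ^ p.2 / p.2.factorial) := by
  refine summable_mul_of_summable_norm (f := fun m : ℕ => a ^ m / m.factorial)
    (g := fun n : ℕ => b ^ n / n.factorial) ?_ ?_ <;>
  simpa [abs_div, abs_pow] using Real.summable_pow_div_factorial _

theorem iteratedDeriv_expMulTerm_zero_of_lt (A T : ℝ) {k : ℕ} {p : ℕ × ℕ}
    (hk : k < p.1 + p.2) : iteratedDeriv k (expMulTerm A T p) 0 = 0 := by
  rw [expMulTerm_eq_sum, iteratedDeriv_sum_mul_pow]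
  refine sum_eq_zero fun S hS => ?_
  have hcard := card_le_card (mem_powerset.1 hS)
  rw [card_range] at hcard
  rw [zero_pow (by omega), mul_zero]

theorem tsum_iteratedDeriv_four_expMulTerm (A T : ℝ) :
    ∑' p, iteratedDeriv 4 (expMulTerm A T p) 0 =
      A ^ 4 - 2 * A ^ 3 * T + 6 * A ^ 2 * T + 2 * A ^ 2 * T ^ 2 - 6 * A * T ^ 2 - A * T ^ 3 +
        2 * T ^ 2 + 11 / 6 * T ^ 3 + T ^ 4 / 5 := by
  rw [tsum_eq_sum (s := range 5 ×ˢ range 5) fun p hp => iteratedDeriv_expMulTerm_zero_of_lt A T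
    (by simp only [mem_product, mem_range, not_and_or, not_lt] at hp; omega)]
  simp only [expMulTerm_eq_sum, iteratedDeriv_sum_mul_pow, sum_product, sum_range_succ,
    sum_powerset_range_succ, range_zero, powerset_empty, sum_singleton]
  norm_num [oneF1twoCoeff, Nat.factorial, Nat.descFactorial]
  ring

theorem iteratedDeriv_four_exp_mul_oneF1two (A T : ℝ) :
    iteratedDeriv 4 (fun s => exp (A * s) * oneF1two (1 - s) (-(T * s))) 0 =
      A ^ 4 - 2 * A ^ 3 * T + 6 * A ^ 2 * T + 2 * A ^ 2 * T ^ 2 - 6 * A * T ^ 2 - A * T ^ 3 +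
        2 * T ^ 2 + 11 / 6 * T ^ 3 + T ^ 4 / 5 := by
  have hball : Set.EqOn (fun s => exp (A * s) * oneF1two (1 - s) (-(T * s)))
      (fun s => ∑' p, expMulTerm A T p s) (Metric.ball 0 1) := fun s hs =>
    exp_mul_oneF1two_eq_tsum A T (by rw [mem_ball_zero_iff] at hs; exact hs.le)
  have h0 : (0 : ℝ) ∈ Metric.ball 0 1 := Metric.mem_ball_self one_pos
  rw [hball.iteratedDeriv_of_isOpen Metric.isOpen_ball 4 h0,
    iteratedDeriv_tsum_of_isPreconnected (fun p => by rw [expMulTerm_eq_sum]; fun_prop)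
      (fun k _ => summable_pow_div_factorial_mul (2 ^ k * |A|) (4 ^ k * |T|)) Metric.isOpen_ball
      (convex_ball 0 1).isPreconnected
      (fun k _ p s hs => abs_iteratedDeriv_expMulTerm_le A T k p
        (by rw [mem_ball_zero_iff] at hs; exact hs.le)) h0]
  exact tsum_iteratedDeriv_four_expMulTerm A T

theorem fourth_moment_logY_general (σ : ℝ) :
    iteratedDeriv 4 (fun s : ℝ => Real.exp (σ ^ 2 * s / 2) * oneF1two (1 - s) (-(σ ^ 2 * s))) 0 =
      2 * σ ^ 4 + σ ^ 6 / 3 + σ ^ 8 / 80 := by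
  simp only [mul_div_right_comm (σ ^ 2)]
  rw [iteratedDeriv_four_exp_mul_oneF1two]
  ring

theorem fourth_moment_logY (σ : ℝ) (hσ : 0 < σ) :
    iteratedDeriv 4 (fun s : ℝ => Real.exp (σ ^ 2 * s / 2) * oneF1two (1 - s) (-(σ ^ 2 * s))) 0 =
      2 * σ ^ 4 + σ ^ 6 / 3 + σ ^ 8 / 80 :=
  fourth_moment_logY_general σ
end

section
/- For every positive integer k and every complex z, the k-th derivative at t = 0 of the function t ↦ z/(e^{-t} - z), for |z| < 1, equals Σ_{l≥1} l^k z^l. -/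
/-!
For `‖z eᵗ‖ < 1` the geometric series gives `z / (e⁻ᵗ - z) = ∑_{l ≥ 1} zˡ eˡᵗ`. On a half-plane
`re t < r` with `‖z‖ eʳ < 1`, this exponential series and each of its termwise derivatives are
dominated by the summable `∑ lᵐ (‖z‖ eʳ)ˡ`, so it may be differentiated termwise any number of
times; each differentiation multiplies the `l`-th term by `l`, and `t = 0` gives `∑ lᵏ zˡ`.
-/

open Complex Filter Topology

lemma exists_pos_mul_exp_lt_one {a : ℝ} (ha : a < 1) : ∃ r > 0, a * Real.exp r < 1 := by
  have hcont : Tendsto (fun r => a * Real.exp r) (𝓝[>] 0) (𝓝 a) := by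
    simpa using (Real.continuous_exp.const_mul a).tendsto 0 |>.mono_left nhdsWithin_le_nhds
  exact (eventually_mem_nhdsWithin.and (hcont.eventually_lt_const ha)).exists

lemma norm_exp_ofReal_mul_le {c r : ℝ} (hc : 0 ≤ c) {w : ℂ} (hw : w.re < r) :
    ‖exp (c * w)‖ ≤ Real.exp (c * r) := by
  rw [norm_exp, re_ofReal_mul]
  gcongr

lemma deriv_const_mul_exp_mul (c μ t : ℂ) :
    deriv (fun w => c * exp (μ * w)) t = c * μ * exp (μ * t) := by
  rw [(((hasDerivAt_id' t).const_mul μ).cexp.const_mul c).deriv]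
  ring

lemma iteratedDeriv_tsum_mul_exp_nat_succ_mul {a : ℕ → ℂ} {r : ℝ}
    (ha : ∀ m : ℕ, Summable fun l : ℕ => ((l : ℝ) + 1) ^ m * ‖a l‖ * Real.exp ((l + 1) * r))
    (m : ℕ) {t : ℂ} (ht : t.re < r) :
    iteratedDeriv m (fun w => ∑' l : ℕ, a l * exp ((l + 1) * w)) t =
      ∑' l : ℕ, ((l : ℂ) + 1) ^ m * a l * exp ((l + 1) * t) := by
  induction m generalizing t with
  | zero => simp
  | succ m ih =>
    have hU : IsOpen {w : ℂ | w.re < r} := isOpen_lt continuous_re continuous_const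
    have hev : iteratedDeriv m (fun w => ∑' l : ℕ, a l * exp ((l + 1) * w)) =ᶠ[𝓝 t]
        fun w => ∑' l : ℕ, ((l : ℂ) + 1) ^ m * a l * exp ((l + 1) * w) :=
      eventually_of_mem (hU.mem_nhds ht) fun w hw => ih hw
    have hbound (l : ℕ) (w : ℂ) (hw : w.re < r) :
        ‖((l : ℂ) + 1) ^ m * a l * exp ((l + 1) * w)‖ ≤
          ((l : ℝ) + 1) ^ m * ‖a l‖ * Real.exp ((l + 1) * r) := by
      rw [norm_mul, norm_mul, norm_pow]
      gcongr
      · exact_mod_cast (norm_natCast (l + 1)).le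
      · exact_mod_cast norm_exp_ofReal_mul_le (by positivity) hw
    have hdiff (l : ℕ) : DifferentiableOn ℂ
        (fun w => ((l : ℂ) + 1) ^ m * a l * exp ((l + 1) * w)) {w | w.re < r} :=
      (differentiable_exp.comp (differentiable_id.const_mul _)).const_mul _ |>.differentiableOn
    rw [iteratedDeriv_succ, hev.deriv_eq,
      ← (hasSum_deriv_of_summable_norm (ha m) hdiff hU hbound ht).tsum_eq]
    congr 1 with l
    rw [deriv_const_mul_exp_mul]
    ring

lemma hasSum_pow_succ_mul_exp {z t : ℂ} (h : ‖z * exp t‖ < 1) :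
    HasSum (fun l : ℕ => z ^ (l + 1) * exp ((l + 1) * t)) (z / (exp (-t) - z)) := by
  have hne : 1 - z * exp t ≠ 0 := by
    intro h0
    simp [show z * exp t = 1 by linear_combination -h0] at h
  have hterm (l : ℕ) : z ^ (l + 1) * exp ((l + 1) * t) = z * exp t * (z * exp t) ^ l := by
    rw [← pow_succ', mul_pow, ← exp_nat_mul]
    push_cast
    rfl
  have hsum : z / (exp (-t) - z) = z * exp t * (1 - z * exp t)⁻¹ := by
    rw [exp_neg]
    field_simp
  simpa only [hterm, hsum] using (hasSum_geometric_of_norm_lt_one h).mul_left (z * exp t)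

lemma summable_pow_mul_norm_pow_succ_mul_exp {z : ℂ} {r : ℝ} (h : ‖z‖ * Real.exp r < 1)
    (m : ℕ) :
    Summable fun l : ℕ => ((l : ℝ) + 1) ^ m * ‖z ^ (l + 1)‖ * Real.exp ((l + 1) * r) := by
  have hq : ‖‖z‖ * Real.exp r‖ < 1 := by rwa [Real.norm_of_nonneg (by positivity)]
  have hshift := (summable_nat_add_iff
    (f := fun n : ℕ => (n : ℝ) ^ m * (‖z‖ * Real.exp r) ^ n) 1).2
    (summable_pow_mul_geometric_of_norm_lt_one m hq)
  refine hshift.congr fun l => ?_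
  rw [norm_pow, mul_pow, ← Real.exp_nat_mul]
  push_cast
  ring

theorem iteratedDeriv_geom_exp_general (k : ℕ) (z : ℂ) (hz : ‖z‖ < 1) :
    iteratedDeriv k (fun t : ℂ => z / (Complex.exp (-t) - z)) 0 =
      ∑' l : ℕ, ((l : ℂ) + 1) ^ k * z ^ (l + 1) := by
  obtain ⟨r, hr0, hr⟩ := exists_pos_mul_exp_lt_one hz
  have hnear : (fun t : ℂ => z / (exp (-t) - z)) =ᶠ[𝓝 0]
      fun t => ∑' l : ℕ, z ^ (l + 1) * exp ((l + 1) * t) := by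
    have hcont : Continuous fun t : ℂ => ‖z * exp t‖ := by fun_prop
    filter_upwards [hcont.continuousAt.eventually_lt continuousAt_const (by simpa using hz)]
      with t ht using (hasSum_pow_succ_mul_exp ht).tsum_eq.symm
  rw [hnear.iteratedDeriv_eq, iteratedDeriv_tsum_mul_exp_nat_succ_mul
    (summable_pow_mul_norm_pow_succ_mul_exp hr) k (by simpa using hr0)]
  simp

theorem iteratedDeriv_geom_exp (k : ℕ) (hk : 0 < k) (z : ℂ) (hz : ‖z‖ < 1) :
    iteratedDeriv k (fun t : ℂ => z / (Complex.exp (-t) - z)) 0 =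
      ∑' l : ℕ, ((l : ℂ) + 1) ^ k * z ^ (l + 1) :=
  iteratedDeriv_geom_exp_general k z hz
end

section
/- For positive integers k, let m_k = (1/k)·Σ_{m=0}^{k-1} (k^m/m!)·C(k, m+1) (so that e^{k/2} m_k is the k-th moment of the central limit Y). Then m_k ≥ 1 for all k ≥ 1, and m_k is strictly increasing in k for k ≥ 1. -/
/-!
Write `m_k = ∑_{m<k} t(k, m)` with `t(k, m) = k^m C(k, m+1) / (k · m!) ≥ 0`. Since `t(k, 0) = 1`,
`m_k ≥ 1`. Each term grows with `k`, because `(k+1) C(k, m+1) = (k-m) C(k+1, m+1)` and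
`(k-m) k^m ≤ k (k+1)^m`; and `m_{k+1}` has the extra positive term `t(k+1, k)`.
-/

open Finset

/-- `m_k = (1/k) Σ_{m<k} (k^m/m!) C(k,m+1)`. -/
noncomputable def mSeq (k : ℕ) : ℝ :=
  (1 / k) * ∑ m ∈ Finset.range k, (k : ℝ) ^ m / m.factorial * (Nat.choose k (m + 1))

theorem Nat.pow_mul_choose_succ_mul_le (k m : ℕ) :
    k ^ m * k.choose (m + 1) * (k + 1) ≤ (k + 1) ^ m * (k + 1).choose (m + 1) * k := by
  rw [mul_assoc, Nat.choose_mul_succ_eq, mul_assoc]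
  gcongr
  · omega
  · omega

noncomputable def mTerm (k m : ℕ) : ℝ := (k : ℝ) ^ m * k.choose (m + 1) / (k * m.factorial)

lemma mSeq_eq_sum_mTerm (k : ℕ) : mSeq k = ∑ m ∈ range k, mTerm k m := by
  rw [mSeq, mul_sum]
  refine sum_congr rfl fun m _ => ?_
  rw [mTerm]
  field_simp

lemma mTerm_nonneg (k m : ℕ) : 0 ≤ mTerm k m := by
  unfold mTerm; positivity

lemma mTerm_zero {k : ℕ} (hk : k ≠ 0) : mTerm k 0 = 1 := by
  simp [mTerm, hk]

lemma mTerm_self_pos (k : ℕ) : 0 < mTerm (k + 1) k := by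
  unfold mTerm; simp only [Nat.choose_self]; positivity

lemma mTerm_le_mTerm_succ {k : ℕ} (hk : 0 < k) (m : ℕ) : mTerm k m ≤ mTerm (k + 1) m := by
  have key : ((k : ℝ) ^ m * k.choose (m + 1) * (k + 1)) ≤ (k + 1) ^ m * (k + 1).choose (m + 1) * k := by
    exact_mod_cast Nat.pow_mul_choose_succ_mul_le k m
  unfold mTerm
  rw [div_le_div_iff₀ (by positivity) (by positivity)]
  push_cast
  calc _ = (k : ℝ) ^ m * k.choose (m + 1) * (k + 1) * m.factorial := by ring
    _ ≤ (k + 1) ^ m * (k + 1).choose (m + 1) * k * m.factorial := by gcongr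
    _ = _ := by ring

theorem mSeq_one_le_and_strictMono :
    (∀ k : ℕ, 1 ≤ k → 1 ≤ mSeq k) ∧ ∀ k : ℕ, 1 ≤ k → mSeq k < mSeq (k + 1) := by
  refine ⟨fun k hk => ?_, fun k hk => ?_⟩
  · rw [mSeq_eq_sum_mTerm, ← mTerm_zero (k := k) (by omega)]
    exact single_le_sum (fun m _ => mTerm_nonneg k m) (mem_range.2 hk)
  · rw [mSeq_eq_sum_mTerm, mSeq_eq_sum_mTerm, sum_range_succ]
    calc ∑ m ∈ range k, mTerm k m ≤ ∑ m ∈ range k, mTerm (k + 1) m :=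
          sum_le_sum fun m _ => mTerm_le_mTerm_succ hk m
      _ < _ := lt_add_of_pos_right _ (mTerm_self_pos k)
end
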